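/- For all x, y in the unit disk B² ⊂ ℂ, (1/2)·b_{B²,2}(x,y) ≤ j*_{B²}(x,y) ≤ b_{B²,2}(x,y). -/

import Mathlib

/-- The j*-metric of the unit disk. -/
noncomputable def jB (x y : ℂ) : ℝ :=
  ‖x - y‖ /
    (‖x - y‖ + 2 * min (1 - ‖x‖) (1 - ‖y‖))

/-- Barrlund metric with parameter 2 of the unit disk (closed form). -/
noncomputable def bB2 (x y : ℂ) : ℝ :=
  ‖x - y‖ /
    Real.sqrt (2 + ‖x‖ ^ 2 + ‖y‖ ^ 2 - 2 * ‖x + y‖)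

/-! Write `R = 2 + |x|² + |y|² - 2|x+y|`, so that `b(x,y) = |x-y| / √R`, and `m = min (1-|x|) (1-|y|)`;
both inequalities amount to `√R ≤ |x-y| + 2m ≤ 2√R`.

Upper bound: for a unit vector `z`, `R ≤ |x-z|² + |y-z|²`. If `|y| ≤ |x|`, the choice `z = x/|x|`
gives `|x-z| = m` and `|y-z| ≤ |x-y| + m`, hence `R ≤ m² + (|x-y| + m)² ≤ (|x-y| + 2m)²`.

Lower bound: `2m ≤ 2 - |x| - |y| ≤ 2 - |x+y|`, and by the parallelogram law
`(|x-y| + 2 - |x+y|)² ≤ 2(|x-y|² + (2 - |x+y|)²) = 4R`. -/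

variable {V : Type*} [NormedAddCommGroup V]

noncomputable def barrlundRadicand (x y : V) : ℝ :=
  2 + ‖x‖ ^ 2 + ‖y‖ ^ 2 - 2 * ‖x + y‖

lemma barrlundRadicand_comm (x y : V) : barrlundRadicand x y = barrlundRadicand y x := by
  rw [barrlundRadicand, barrlundRadicand, add_comm x y]
  ring

variable [InnerProductSpace ℝ V]

lemma barrlundRadicand_le_of_norm_eq_one (x y : V) {z : V} (hz : ‖z‖ = 1) :
    barrlundRadicand x y ≤ ‖x - z‖ ^ 2 + ‖y - z‖ ^ 2 := by
  have hinner : inner ℝ x z + inner ℝ y z ≤ ‖x + y‖ := by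
    simpa [hz, inner_add_left] using real_inner_le_norm (x + y) z
  rw [barrlundRadicand, norm_sub_sq_real, norm_sub_sq_real, hz]
  linarith

lemma barrlundRadicand_le_sq_of_norm_le {x y : V} (hx : ‖x‖ ≤ 1) (hyx : ‖y‖ ≤ ‖x‖) :
    barrlundRadicand x y ≤ (‖x - y‖ + 2 * (1 - ‖x‖)) ^ 2 := by
  rcases eq_or_ne x 0 with rfl | hx0
  · obtain rfl : y = 0 := norm_le_zero_iff.mp (by simpa using hyx)
    norm_num [barrlundRadicand]
  set z := ‖x‖⁻¹ • x
  have hz : ‖z‖ = 1 := norm_smul_inv_norm hx0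
  have hxz : ‖x - z‖ = 1 - ‖x‖ := by
    have hray : SameRay ℝ x z := SameRay.sameRay_nonneg_smul_right x (by positivity)
    rw [hray.norm_sub, hz, abs_sub_comm, abs_of_nonneg (by linarith)]
  have hyz : ‖y - z‖ ≤ ‖x - y‖ + (1 - ‖x‖) := by
    calc ‖y - z‖ ≤ ‖y - x‖ + ‖x - z‖ := norm_sub_le_norm_sub_add_norm_sub y x z
      _ = ‖x - y‖ + (1 - ‖x‖) := by rw [norm_sub_rev, hxz]
  calc barrlundRadicand x y ≤ ‖x - z‖ ^ 2 + ‖y - z‖ ^ 2 :=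
        barrlundRadicand_le_of_norm_eq_one x y hz
    _ ≤ (1 - ‖x‖) ^ 2 + (‖x - y‖ + (1 - ‖x‖)) ^ 2 := by
        rw [hxz]
        gcongr
    _ ≤ (‖x - y‖ + 2 * (1 - ‖x‖)) ^ 2 := by nlinarith [norm_nonneg (x - y)]

lemma barrlundRadicand_le_sq_add_two_min {x y : V} (hx : ‖x‖ ≤ 1) (hy : ‖y‖ ≤ 1) :
    barrlundRadicand x y ≤ (‖x - y‖ + 2 * min (1 - ‖x‖) (1 - ‖y‖)) ^ 2 := by
  rcases le_total ‖y‖ ‖x‖ with hyx | hxy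
  · rw [min_eq_left (by linarith)]
    exact barrlundRadicand_le_sq_of_norm_le hx hyx
  · rw [min_eq_right (by linarith), barrlundRadicand_comm, norm_sub_rev]
    exact barrlundRadicand_le_sq_of_norm_le hy hxy

lemma sq_add_two_min_le_four_mul_barrlundRadicand {x y : V} (hx : ‖x‖ ≤ 1) (hy : ‖y‖ ≤ 1) :
    (‖x - y‖ + 2 * min (1 - ‖x‖) (1 - ‖y‖)) ^ 2 ≤ 4 * barrlundRadicand x y := by
  have hm : 2 * min (1 - ‖x‖) (1 - ‖y‖) ≤ 2 - ‖x + y‖ := by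
    linarith [norm_add_le x y, min_le_left (1 - ‖x‖) (1 - ‖y‖),
      min_le_right (1 - ‖x‖) (1 - ‖y‖)]
  calc (‖x - y‖ + 2 * min (1 - ‖x‖) (1 - ‖y‖)) ^ 2 ≤ (‖x - y‖ + (2 - ‖x + y‖)) ^ 2 := by
        gcongr
    _ ≤ 2 * (‖x - y‖ ^ 2 + (2 - ‖x + y‖) ^ 2) := by
        nlinarith [sq_nonneg (‖x - y‖ - (2 - ‖x + y‖))]
    _ = 4 * barrlundRadicand x y := by
        rw [barrlundRadicand]
        linear_combination 2 * parallelogram_law_with_norm ℝ x y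

theorem stmt_4 (x y : ℂ) (hx : ‖x‖ < 1) (hy : ‖y‖ < 1) :
    (1 / 2) * bB2 x y ≤ jB x y ∧ jB x y ≤ bB2 x y := by
  set m := min (1 - ‖x‖) (1 - ‖y‖)
  have hm : 0 < ‖x - y‖ + 2 * m := by
    have : 0 < m := lt_min (by linarith) (by linarith)
    positivity
  have hupper := barrlundRadicand_le_sq_add_two_min hx.le hy.le
  have hlower := sq_add_two_min_le_four_mul_barrlundRadicand hx.le hy.le
  have hsqrt_pos : 0 < √(barrlundRadicand x y) :=
    Real.sqrt_pos.mpr (by linarith [pow_pos hm 2])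
  have hsqrt_le : √(barrlundRadicand x y) ≤ ‖x - y‖ + 2 * m :=
    Real.sqrt_le_iff.mpr ⟨hm.le, hupper⟩
  have hle_sqrt : (‖x - y‖ + 2 * m) / 2 ≤ √(barrlundRadicand x y) :=
    Real.le_sqrt_of_sq_le (by linarith)
  constructor
  · rw [jB, bB2, ← barrlundRadicand, one_div_mul_eq_div, div_div]
    exact div_le_div_of_nonneg_left (norm_nonneg _) hm (by linarith)
  · exact div_le_div_of_nonneg_left (norm_nonneg _) hsqrt_pos hsqrt_le
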